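/- arXiv:2308.02807 — 6 statements merged into one kernel-verified Lean document; each statement's English description precedes it below -/
import Mathlib

section
/- Let p and q be nonprincipal ultrafilters on ℕ both containing the set P of prime numbers. Then E₁(p,q) ≠ E₂(q,p). -/
/-- `E₁(p,q)`: the ultrafilter with `A ∈ E₁(p,q) ↔ {n | {m | n^m ∈ A} ∈ q} ∈ p`. -/
def E1 (p q : Ultrafilter ℕ) : Ultrafilter ℕ := p.bind fun n => q.map fun m => n ^ m

/-- `E₂(p,q)`: the ultrafilter with `A ∈ E₂(p,q) ↔ {n | {m | m^n ∈ A} ∈ q} ∈ p`. -/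
def E2 (p q : Ultrafilter ℕ) : Ultrafilter ℕ := p.bind fun n => q.map fun m => m ^ n

lemma free_gt (q : Ultrafilter ℕ) (hq : ∀ a : ℕ, q ≠ pure a) (n : ℕ) :
    {m : ℕ | n < m} ∈ q := by
  by_contra h
  rw [← Ultrafilter.compl_mem_iff_notMem] at h
  have hfin : ({m : ℕ | n < m}ᶜ).Finite := by
    have : {m : ℕ | n < m}ᶜ = Set.Iic n := by ext m; simp [Set.mem_Iic]
    rw [this]; exact Set.finite_Iic n
  obtain ⟨a, _, ha⟩ := Ultrafilter.eq_pure_of_finite_mem hfin h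
  exact hq a ha

theorem stmt2 (p q : Ultrafilter ℕ)
    (hp : ∀ a : ℕ, p ≠ pure a) (hq : ∀ a : ℕ, q ≠ pure a)
    (hpP : {n : ℕ | n.Prime} ∈ p) (hqP : {n : ℕ | n.Prime} ∈ q) :
    E1 p q ≠ E2 q p := by
  set S : Set ℕ := {x | ∃ a b : ℕ, a.Prime ∧ b.Prime ∧ a < b ∧ x = a ^ b} with hS
  have hS1 : S ∈ E1 p q := by
    have : {n : ℕ | {m : ℕ | n ^ m ∈ S} ∈ q} ∈ p := by
      filter_upwards [hpP] with n hn
      filter_upwards [hqP, free_gt q hq n] with m hm hnm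
      exact ⟨n, m, hn, hm, hnm, rfl⟩
    exact this
  have hS2 : S ∉ E2 q p := by
    rw [← Ultrafilter.compl_mem_iff_notMem]
    have : {n : ℕ | {m : ℕ | m ^ n ∈ Sᶜ} ∈ p} ∈ q := by
      filter_upwards [hqP] with n hn
      filter_upwards [hpP, free_gt p hp n] with m hm hnm
      rintro ⟨a, b, ha, hb, hab, hx⟩
      have hma : m = a := by
        have : a ∣ m ^ n := hx ▸ dvd_pow_self a hb.pos.ne'
        have := (Nat.Prime.dvd_of_dvd_pow ha this)
        exact ((Nat.prime_dvd_prime_iff_eq ha hm).mp this).symm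
      subst hma
      have : n = b := Nat.pow_right_injective hm.two_le hx
      omega
    exact this
  intro h
  exact hS2 (h ▸ hS1)
end

section
/- Let p, q, r be ultrafilters on ℕ. Then E₁(p, q ⊙ r) = E₁(E₁(p, q), r), where E₁(u,v) = {A ⊆ ℕ : {x : {y : x^y ∈ A} ∈ v} ∈ u} and q ⊙ r is the ultrafilter product {A : {x : {y : xy ∈ A} ∈ r} ∈ q}. -/
/-- Ultrafilter product: `A ∈ u ⊙ v ↔ {x | {y | x·y ∈ A} ∈ v} ∈ u`. -/
def umul (u v : Ultrafilter ℕ) : Ultrafilter ℕ := u.bind fun x => v.map fun y => x * y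

lemma mem_ubind {α β} {u : Ultrafilter α} {m : α → Ultrafilter β} {A : Set β} :
    A ∈ u.bind m ↔ {x | A ∈ m x} ∈ u := Iff.rfl

theorem stmt10 (p q r : Ultrafilter ℕ) :
    E1 p (umul q r) = E1 (E1 p q) r := by
  ext A
  simp only [E1, umul, mem_ubind, Ultrafilter.mem_map, Set.preimage_setOf_eq,
    Set.mem_setOf_eq, Set.preimage_preimage, pow_mul]
end

section
/- Let p, q, r be ultrafilters on ℕ. Then E₂(p ⊙ q, r) = E₂(p, E₂(q, r)), where E₂(u,v) = {A ⊆ ℕ : {x : {y : y^x ∈ A} ∈ v} ∈ u} and ⊙ is the ultrafilter product. -/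
lemma mem_ubind_s12 {f : Ultrafilter ℕ} {m : ℕ → Ultrafilter ℕ} {s : Set ℕ} :
    s ∈ f.bind m ↔ {x | s ∈ m x} ∈ f := by
  show s ∈ Filter.bind ↑f (fun x => ↑(m x)) ↔ _
  rw [Filter.mem_bind']
  rfl

theorem stmt12 (p q r : Ultrafilter ℕ) :
    E2 (umul p q) r = E2 p (E2 q r) := by
  ext A
  simp only [E2, umul, mem_ubind_s12, Ultrafilter.mem_map, Set.preimage_preimage,
    Set.preimage_setOf_eq, Set.mem_preimage, Set.mem_setOf_eq, pow_mul']
end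

section
/- Let n > 1 be a natural number and let q be an ultrafilter on ℕ such that for every A ∈ q there exist a, b ∈ ℕ with a ∈ A, b ∈ A, and a·n^b ∈ A (q witnesses partition regularity of {x, y, x·n^y}). Then the ultrafilter n^q (the pushforward of q under m ↦ n^m) is an exponential Schur witness: for every A ∈ n^q there exist x, y ∈ A with x^y ∈ A. -/
theorem stmt17 (n : ℕ) (hn : 1 < n) (q : Ultrafilter ℕ)
    (hq : ∀ A ∈ q, ∃ a b : ℕ, a ∈ A ∧ b ∈ A ∧ a * n ^ b ∈ A) :
    ∀ A ∈ Ultrafilter.map (fun m => n ^ m) q,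
      ∃ x y : ℕ, x ∈ A ∧ y ∈ A ∧ x ^ y ∈ A := by
  intro A hA
  have h : {m | n ^ m ∈ A} ∈ q := hA
  obtain ⟨a, b, ha, hb, hab⟩ := hq _ h
  exact ⟨n ^ a, n ^ b, ha, hb, by rw [← pow_mul]; exact hab⟩
end

section
/- There is no ultrafilter p on ℕ, other than the principal ultrafilters, and no ultrafilter q on ℕ, such that E₁(q, p) = p when p is nonprincipal. More precisely: for every ultrafilter q on ℕ and every nonprincipal ultrafilter p on ℕ, E₁(q, p) ≠ p. In particular there is no nonprincipal E₁-idempotent (no nonprincipal p with E₁(p,p) = p). This may be proved assuming the existence of a 4-coloring ℕ = A₁ ∪ A₂ ∪ A₃ ∪ A₄ with no i and no a, b > 1 satisfying log₂ a ≤ b and both b ∈ A_i and a^b ∈ A_i. -/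
open Filter

theorem mem_E1 {p q : Ultrafilter ℕ} {s : Set ℕ} :
    s ∈ E1 p q ↔ {x | {y | x ^ y ∈ s} ∈ q} ∈ p := Iff.rfl

theorem Ultrafilter.exists_mem_of_forall_exists_mem {α ι : Type*} [Finite ι]
    (p : Ultrafilter α) (A : ι → Set α) (hA : ∀ x, ∃ i, x ∈ A i) : ∃ i, A i ∈ p := by
  have hunion : (⋃ i ∈ (Set.univ : Set ι), A i) ∈ p := by
    rw [Set.biUnion_univ, Set.iUnion_eq_univ_iff.mpr hA]
    exact univ_mem
  obtain ⟨i, -, hi⟩ := (Ultrafilter.finite_biUnion_mem_iff Set.finite_univ).mp hunion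
  exact ⟨i, hi⟩

theorem Ultrafilter.eventually_ge_of_ne_pure (p : Ultrafilter ℕ) (hp : ∀ a, p ≠ pure a)
    (N : ℕ) : ∀ᶠ n in p, N ≤ n := by
  have hcof : (p : Filter ℕ) ≤ cofinite :=
    p.le_cofinite_or_eq_pure.resolve_right fun ⟨a, ha⟩ => hp a ha
  rw [Nat.cofinite_eq_atTop] at hcof
  exact hcof (eventually_ge_atTop N)

theorem Real.logb_two_le_of_le {a b : ℕ} (hab : a ≤ b) : Real.logb 2 a ≤ b := by
  rcases Nat.eq_zero_or_pos a with rfl | ha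
  · simp
  rw [Real.logb_le_iff_le_rpow one_lt_two (by exact_mod_cast ha), Real.rpow_natCast]
  exact_mod_cast (Nat.lt_two_pow_self.trans_le (Nat.pow_le_pow_right two_pos hab)).le

theorem exists_monochromatic_pow_of_E1_eq {ι : Type*} [Finite ι] (A : ι → Set ℕ)
    (hA : ∀ n, ∃ i, n ∈ A i) {q p : Ultrafilter ℕ} (hp : ∀ a, p ≠ pure a) (hqp : E1 q p = p) :
    ∃ i a b, 1 < a ∧ a ≤ b ∧ b ∈ A i ∧ a ^ b ∈ A i := by
  obtain ⟨i, hi⟩ := p.exists_mem_of_forall_exists_mem A hA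
  have hS : A i ∩ {n | 1 < n} ∈ E1 q p := by
    rw [hqp]
    exact inter_mem hi (p.eventually_ge_of_ne_pure hp 2)
  obtain ⟨a, ha⟩ := q.nonempty_of_mem (mem_E1.mp hS)
  obtain ⟨b, ⟨hpowA, hpow⟩, hb, hab⟩ :=
    p.nonempty_of_mem (inter_mem ha (inter_mem hi (p.eventually_ge_of_ne_pure hp a)))
  refine ⟨i, a, b, ?_, hab, hb, hpowA⟩
  by_contra! ha1
  exact absurd (pow_le_one' ha1 b) (not_le.mpr hpow)

theorem stmt18
    (hcol : ∃ A : Fin 4 → Set ℕ, (∀ n : ℕ, ∃ i, n ∈ A i) ∧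
      ¬ ∃ (i : Fin 4) (a b : ℕ), 1 < a ∧ 1 < b ∧ Real.logb 2 (a : ℝ) ≤ (b : ℝ) ∧
        b ∈ A i ∧ a ^ b ∈ A i) :
    (∀ (q p : Ultrafilter ℕ), (∀ a : ℕ, p ≠ pure a) → E1 q p ≠ p) ∧
      ¬ ∃ p : Ultrafilter ℕ, (∀ a : ℕ, p ≠ pure a) ∧ E1 p p = p := by
  obtain ⟨A, hA, hnone⟩ := hcol
  have hne : ∀ (q p : Ultrafilter ℕ), (∀ a : ℕ, p ≠ pure a) → E1 q p ≠ p := by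
    intro q p hp hqp
    obtain ⟨i, a, b, ha, hab, hb, hpowA⟩ := exists_monochromatic_pow_of_E1_eq A hA hp hqp
    exact hnone ⟨i, a, b, ha, ha.trans_le hab, Real.logb_two_le_of_le hab, hb, hpowA⟩
  exact ⟨hne, fun ⟨p, hp, hpp⟩ => hne p p hp hpp⟩
end

section
/- Let p be an ultrafilter on ℕ such that p = E₂(p, p), where E₂(u,v) = {A : {x : {y : y^x ∈ A} ∈ v} ∈ u}. Then for each A ∈ p there exists a sequence (x_n) in ℕ such that all x_n ∈ A and for all n, x_{n+1}^y ∈ A whenever y is a finite product of the form ∏_{t ∈ F} x_t with F a nonempty subset of {1, ..., n}. -/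
namespace Stmt19Aux

variable (p : Ultrafilter ℕ) (A : Set ℕ)

/-- exponential star: exponents `n` such that `{m | m^n ∈ C} ∈ p`. -/
def star (C : Set ℕ) : Set ℕ := {n | {m | m ^ n ∈ C} ∈ p}

lemma mem_E2 (q : Ultrafilter ℕ) (C : Set ℕ) :
    C ∈ E2 p q ↔ {n | {m | m ^ n ∈ C} ∈ q} ∈ p := by
  simp [E2, Ultrafilter.bind, Filter.mem_bind', Ultrafilter.mem_map]
  rfl

lemma star_mem (hp : p = E2 p p) {C : Set ℕ} (hC : C ∈ p) : star p C ∈ p := by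
  have h : C ∈ E2 p p := hp ▸ hC
  rw [mem_E2] at h
  exact h

/-- the target set for choosing the next element, given the finite set `Y` of
products so far. -/
def T (Y : Finset ℕ) : Set ℕ :=
  A ∩ star p A ∩ ⋂ y ∈ Y, ({m | m ^ y ∈ A} ∩ star p {m | m ^ y ∈ A})

lemma T_mem (hp : p = E2 p p) (hA : A ∈ p) {Y : Finset ℕ}
    (hY : ∀ y ∈ Y, {m | m ^ y ∈ A} ∈ p) : T p A Y ∈ p := by
  refine Filter.inter_mem (Filter.inter_mem hA (star_mem p hp hA)) ?_
  refine (Filter.biInter_finset_mem Y).2 fun y hy => ?_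
  exact Filter.inter_mem (hY y hy) (star_mem p hp (hY y hy))

open Classical in
noncomputable def pick (Y : Finset ℕ) : ℕ :=
  if h : (T p A Y).Nonempty then h.choose else 1

lemma pick_mem {Y : Finset ℕ} (h : (T p A Y).Nonempty) : pick p A Y ∈ T p A Y := by
  classical
  rw [pick]
  split
  · next h' => exact h'.choose_spec
  · next h' => exact absurd h h'

/-- the sequence: `(st n).1 = x_n`, `(st n).2 = Y_n` (all products so far). -/
noncomputable def st : ℕ → ℕ × Finset ℕ
  | 0 => (1, ∅)
  | n + 1 =>
      let Y := (st n).2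
      let x := pick p A Y
      (x, insert x (Y ∪ Y.image (x * ·)))

end Stmt19Aux

open Stmt19Aux in
theorem stmt19 (p : Ultrafilter ℕ) (hp : p = E2 p p) :
    ∀ A ∈ p, ∃ x : ℕ → ℕ,
      (∀ n : ℕ, 1 ≤ n → x n ∈ A) ∧
      ∀ (n : ℕ) (y : ℕ), 1 ≤ n →
        (∃ F : Finset ℕ, F.Nonempty ∧ F ⊆ Finset.Icc 1 n ∧ y = ∏ t ∈ F, x t) →
          (x (n + 1)) ^ y ∈ A := by
  intro A hA
  set x : ℕ → ℕ := fun n => (st p A n).1 with hxdef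
  set Y : ℕ → Finset ℕ := fun n => (st p A n).2 with hYdef
  -- the invariant
  have key : ∀ n : ℕ, (∀ y ∈ Y n, {m | m ^ y ∈ A} ∈ p) ∧
      (∀ k, k < n → 1 ≤ k + 1 → x (k + 1) ∈ T p A (Y k)) := by
    intro n
    induction n with
    | zero => exact ⟨fun y hy => absurd hy (by simp [hYdef, st]), fun k hk => absurd hk (Nat.not_lt_zero k)⟩
    | succ n ih =>
      obtain ⟨hInv, hmem⟩ := ih
      have hT : T p A (Y n) ∈ p := T_mem p A hp hA hInv
      have hTne : (T p A (Y n)).Nonempty := Ultrafilter.nonempty_of_mem hT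
      have hxmem : x (n + 1) ∈ T p A (Y n) := by
        show (st p A (n+1)).1 ∈ _
        rw [st]
        exact pick_mem p A hTne
      have hYsucc : Y (n + 1) = insert (x (n+1)) (Y n ∪ (Y n).image ((x (n+1)) * ·)) := by
        show (st p A (n+1)).2 = _
        rw [st]
        rfl
      constructor
      · intro y hy
        rw [hYsucc] at hy
        rcases Finset.mem_insert.1 hy with h | h
        · subst h
          exact hxmem.1.2
        · rcases Finset.mem_union.1 h with h | h
          · exact hInv y h
          · obtain ⟨z, hz, rfl⟩ := Finset.mem_image.1 h
            have h1 : x (n+1) ∈ star p {m | m ^ z ∈ A} :=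
              (Set.mem_iInter₂.1 hxmem.2 z hz).2
            have h2 : {m | m ^ (x (n+1)) ∈ {m' | m' ^ z ∈ A}} ∈ p := h1
            have : {m | m ^ (x (n+1)) ∈ {m' | m' ^ z ∈ A}} = {m | m ^ (x (n+1) * z) ∈ A} := by
              ext m; simp [pow_mul]
            rwa [this] at h2
      · intro k hk _
        rcases Nat.lt_succ_iff_lt_or_eq.1 hk with h | h
        · exact hmem k h (Nat.le_add_left 1 k)
        · subst h; exact hxmem
  -- products lemma
  have prods : ∀ n : ℕ, ∀ F : Finset ℕ, F.Nonempty → F ⊆ Finset.Icc 1 n →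
      (∏ t ∈ F, x t) ∈ Y n := by
    intro n
    induction n with
    | zero =>
      intro F hF hsub
      exfalso
      obtain ⟨a, ha⟩ := hF
      simpa using hsub ha
    | succ n ih =>
      intro F hF hsub
      have hYsucc : Y (n + 1) = insert (x (n+1)) (Y n ∪ (Y n).image ((x (n+1)) * ·)) := by
        show (st p A (n+1)).2 = _
        rw [st]
        rfl
      by_cases hmem : n + 1 ∈ F
      · have hprod : ∏ t ∈ F, x t = x (n+1) * ∏ t ∈ F.erase (n+1), x t :=
          (Finset.mul_prod_erase F x hmem).symm
        by_cases he : (F.erase (n+1)).Nonempty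
        · have hsub' : F.erase (n+1) ⊆ Finset.Icc 1 n := by
            intro a ha
            have h1 := Finset.mem_of_mem_erase ha
            have h2 := Finset.ne_of_mem_erase ha
            have h3 := Finset.mem_Icc.1 (hsub h1)
            exact Finset.mem_Icc.2 ⟨h3.1, lt_of_le_of_ne h3.2 h2 |> Nat.lt_succ_iff.1⟩
          have := ih _ he hsub'
          rw [hYsucc, hprod]
          exact Finset.mem_insert_of_mem (Finset.mem_union_right _
            (Finset.mem_image_of_mem _ this))
        · have : F.erase (n+1) = ∅ := Finset.not_nonempty_iff_eq_empty.1 he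
          rw [hYsucc, hprod, this]
          simp
      · have hsub' : F ⊆ Finset.Icc 1 n := by
          intro a ha
          have h3 := Finset.mem_Icc.1 (hsub ha)
          refine Finset.mem_Icc.2 ⟨h3.1, ?_⟩
          have hne : a ≠ n + 1 := fun h => hmem (h ▸ ha)
          omega
        rw [hYsucc]
        exact Finset.mem_insert_of_mem (Finset.mem_union_left _ (ih F hF hsub'))
  refine ⟨x, ?_, ?_⟩
  · intro n hn
    obtain ⟨k, rfl⟩ := Nat.exists_eq_add_of_le hn
    have := (key (1 + k)).2 k (by omega) (by omega)
    have h1 : 1 + k = k + 1 := by omega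
    rw [h1]
    exact this.1.1
  · rintro n y hn ⟨F, hFne, hFsub, rfl⟩
    have hy : (∏ t ∈ F, x t) ∈ Y n := prods n F hFne hFsub
    have hxmem : x (n + 1) ∈ T p A (Y n) := (key (n+1)).2 n (Nat.lt_succ_self n) (by omega)
    exact (Set.mem_iInter₂.1 hxmem.2 _ hy).1
end
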